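/- If n is an odd positive integer and q is a prime dividing P_n, then q ≡ 1 (mod 4). -/

import Mathlib

/-!
From the addition formula `P (m + n + 1) = P (m + 1) P (n + 1) + P m P n` one gets
`P (2k + 1) = P (k + 1)² + P k²`, a sum of two coprime squares. An odd prime dividing such a
sum makes `-1` a square modulo it, so it is not `3 mod 4`; and `P (2k + 1)` is odd.
-/

/-- The Pell sequence: `P 0 = 0`, `P 1 = 1`, `P (n+2) = 2 * P (n+1) + P n`. -/
def pell : ℕ → ℕ
  | 0 => 0
  | 1 => 1
  | n + 2 => 2 * pell (n + 1) + pell n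

theorem Nat.Prime.mod_four_ne_three_of_dvd_sq_add_sq {p a b : ℕ} (hp : p.Prime)
    (hab : a.Coprime b) (hdvd : p ∣ a ^ 2 + b ^ 2) : p % 4 ≠ 3 := by
  have := Fact.mk hp
  have hsum : (a : ZMod p) ^ 2 + (b : ZMod p) ^ 2 = 0 := by
    exact_mod_cast (ZMod.natCast_eq_zero_iff _ p).mpr hdvd
  have hb : (b : ZMod p) ≠ 0 := by
    intro hb
    rw [hb, zero_pow two_ne_zero, add_zero, pow_eq_zero_iff two_ne_zero] at hsum
    rw [ZMod.natCast_eq_zero_iff] at hsum hb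
    exact hp.one_lt.ne' (Nat.eq_one_of_dvd_coprimes hab hsum hb)
  exact ZMod.mod_four_ne_three_of_sq_eq_neg_sq' hb (eq_neg_of_add_eq_zero_left hsum)

@[simp]
theorem pell_zero : pell 0 = 0 := rfl

@[simp]
theorem pell_one : pell 1 = 1 := rfl

theorem pell_add_two (n : ℕ) : pell (n + 2) = 2 * pell (n + 1) + pell n := rfl

theorem pell_add (m n : ℕ) :
    pell (m + n + 1) = pell (m + 1) * pell (n + 1) + pell m * pell n := by
  induction m generalizing n with
  | zero => simp
  | succ m ih =>
    rw [show m + 1 + n + 1 = m + (n + 1) + 1 by omega, ih, pell_add_two, pell_add_two]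
    ring

theorem pell_two_mul_add_one (k : ℕ) : pell (2 * k + 1) = pell (k + 1) ^ 2 + pell k ^ 2 := by
  rw [two_mul, pell_add, sq, sq]

theorem coprime_pell_pell_succ (n : ℕ) : (pell n).Coprime (pell (n + 1)) := by
  induction n with
  | zero => simp
  | succ n ih =>
    rw [Nat.coprime_comm, pell_add_two, add_comm, mul_comm, Nat.coprime_add_mul_left_left]
    exact ih

theorem pell_mod_two (n : ℕ) : pell n % 2 = n % 2 := by
  induction n using Nat.twoStepInduction with
  | zero => rfl
  | one => rfl
  | more n _ ih => rw [pell_add_two]; omega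

/-- If `n` is an odd positive integer and `q` is a prime dividing `P_n`, then
`q ≡ 1 (mod 4)`. -/
theorem prime_dvd_pell_odd_index (n q : ℕ) (hn : Odd n) (hq : q.Prime)
    (hdvd : q ∣ pell n) : q % 4 = 1 := by
  obtain ⟨k, rfl⟩ := hn
  have hq_odd : q % 2 = 1 := by
    rcases hq.eq_two_or_odd with rfl | h
    · have := pell_mod_two (2 * k + 1)
      omega
    · exact h
  rw [pell_two_mul_add_one] at hdvd
  have := hq.mod_four_ne_three_of_dvd_sq_add_sq (coprime_pell_pell_succ k).symm hdvd
  omega
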